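/- Let f ∈ K[X] and let r ∈ K[X] be the remainder of division of f by the monic polynomial p ∈ D[X] of degree n with roots α_1,...,α_n (with multiplicity) in a splitting field F. Then for all 0 ≤ k < n, Φ^k(f)(α_1,...,α_{k+1}) = Φ^k(r)(α_1,...,α_{k+1}), and r(X) = f(α_1) + Φ^1(f)(α_1,α_2)(X-α_1) + ... + Φ^m(f)(α_1,...,α_{m+1})·∏_{i=1}^m (X-α_i), where m = deg r. -/

import Mathlib

/-! Since `∏_{i ≤ k} (X - α i)` divides `p`, the remainder of `f` modulo it only depends on
`f mod p`, so the divided differences of `f` and `r` at the first `k + 1 ≤ n` roots agree.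
The Newton expansion holds for any polynomial `s` with `deg s ≤ m`: subtracting
`s.coeff m · ∏_{i < m} (X - α i)` lowers the degree without changing the divided differences of
order `< m`, while the one of order `m` is `s.coeff m` because `s` is then its own remainder. -/

open Polynomial Finset

/-- The `k`-th divided difference `Φ^k(f)(a 0, …, a k)` of a polynomial `f`, defined (in a way
valid also for repeated nodes) as the coefficient of `X^k` in the remainder of the division of
`f` by `∏ i, (X - a i)`; for pairwise distinct nodes this agrees with the recursive definition
`Φ^k(f)(X_0,…,X_k) = (Φ^{k-1}(f)(X_0,…,X_{k-1}) - Φ^{k-1}(f)(X_0,…,X_{k-2},X_k))/(X_{k-1}-X_k)`. -/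
noncomputable def divDiff {L : Type*} [Field L] (k : ℕ) (f : Polynomial L)
    (a : Fin (k + 1) → L) : L :=
  (f %ₘ ∏ i, (X - C (a i))).coeff k

namespace Lagrange

variable {R : Type*} [CommRing R]

theorem nodal_range_dvd_nodal_range (v : ℕ → R) {j k : ℕ} (h : j ≤ k) :
    nodal (range j) v ∣ nodal (range k) v :=
  prod_dvd_prod_of_subset _ _ _ (range_subset_range.2 h)

theorem coeff_nodal_range_self [Nontrivial R] (v : ℕ → R) (k : ℕ) :
    (nodal (range k) v).coeff k = 1 := by
  simpa using (nodal_monic (s := range k) (v := v)).coeff_natDegree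

end Lagrange

open Lagrange

section DivDiff

variable {L : Type*} [Field L] (α : ℕ → L)

theorem divDiff_eq_coeff_modByMonic_nodal (k : ℕ) (s : L[X]) :
    divDiff k s (fun i : Fin (k + 1) => α i) = (s %ₘ nodal (range (k + 1)) α).coeff k := by
  rw [divDiff, nodal, Fin.prod_univ_eq_prod_range (fun i => X - C (α i))]

theorem divDiff_eq_of_nodal_dvd_sub {k : ℕ} {f g : L[X]} (h : nodal (range (k + 1)) α ∣ f - g) :
    divDiff k f (fun i : Fin (k + 1) => α i) = divDiff k g (fun i : Fin (k + 1) => α i) := by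
  rw [divDiff_eq_coeff_modByMonic_nodal, divDiff_eq_coeff_modByMonic_nodal,
    modByMonic_eq_of_dvd_sub nodal_monic h]

theorem divDiff_eq_coeff_of_natDegree_le {k : ℕ} {s : L[X]} (hs : s.natDegree ≤ k) :
    divDiff k s (fun i : Fin (k + 1) => α i) = s.coeff k := by
  rw [divDiff_eq_coeff_modByMonic_nodal, (modByMonic_eq_self_iff nodal_monic).2]
  rw [degree_nodal, card_range]
  exact (degree_le_of_natDegree_le hs).trans_lt (by exact_mod_cast k.lt_succ_self)

theorem sum_divDiff_mul_nodal {m : ℕ} {s : L[X]} (hs : s.natDegree ≤ m) :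
    ∑ k ∈ range (m + 1), C (divDiff k s (fun i : Fin (k + 1) => α i)) * nodal (range k) α = s := by
  induction m generalizing s with
  | zero =>
    rw [sum_range_one, divDiff_eq_coeff_of_natDegree_le α hs, range_zero, nodal_empty, mul_one,
      ← eq_C_of_natDegree_le_zero hs]
  | succ m ih =>
    set t := s - C (s.coeff (m + 1)) * nodal (range (m + 1)) α with ht
    have ht_natDegree : t.natDegree ≤ m := by
      refine natDegree_le_pred ((natDegree_sub_le_of_le hs ?_).trans_eq (max_self _)) ?_
      · exact (natDegree_C_mul_le _ _).trans (by rw [natDegree_nodal, card_range])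
      · rw [coeff_sub, coeff_C_mul, coeff_nodal_range_self, mul_one, sub_self]
    have hdivDiff : ∀ k ∈ range (m + 1),
        divDiff k s (fun i : Fin (k + 1) => α i) = divDiff k t (fun i : Fin (k + 1) => α i) :=
      fun k hk => divDiff_eq_of_nodal_dvd_sub α <| by
        rw [ht, sub_sub_cancel]
        exact dvd_mul_of_dvd_right
          (nodal_range_dvd_nodal_range α (mem_range.1 hk)) _
    rw [sum_range_succ, sum_congr rfl fun k hk => by rw [hdivDiff k hk], ih ht_natDegree,
      divDiff_eq_coeff_of_natDegree_le α hs, ht, sub_add_cancel]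

end DivDiff

theorem divDiff_eq_divDiff_modByMonic_and_newton (D : Type*) [CommRing D]
    (L : Type*) [Field L] [Algebra D L] [Algebra (FractionRing D) L]
    [IsScalarTower D (FractionRing D) L]
    (p : D[X]) (hp : p.Monic) (n : ℕ) (hdeg : p.natDegree = n) (α : ℕ → L)
    (hsplit : p.map (algebraMap D L) = ∏ i ∈ Finset.range n, (X - C (α i)))
    (f : Polynomial (FractionRing D))
    (r : Polynomial (FractionRing D))
    (hr : r = f %ₘ p.map (algebraMap D (FractionRing D))) :
    (∀ k < n,
        divDiff k (f.map (algebraMap (FractionRing D) L)) (fun i : Fin (k + 1) => α i.1) =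
        divDiff k (r.map (algebraMap (FractionRing D) L)) (fun i : Fin (k + 1) => α i.1)) ∧
      (r ≠ 0 →
        r.map (algebraMap (FractionRing D) L) =
          ∑ k ∈ Finset.range (r.natDegree + 1),
            C (divDiff k (f.map (algebraMap (FractionRing D) L))
                (fun i : Fin (k + 1) => α i.1)) *
              ∏ i ∈ Finset.range k, (X - C (α i))) := by
  set φ := algebraMap (FractionRing D) L
  set q := p.map (algebraMap D (FractionRing D))
  have hf_sub_r : f.map φ - r.map φ = nodal (range n) α * (f /ₘ q).map φ := by
    rw [← Polynomial.map_sub, sub_eq_iff_eq_add'.2 (hr ▸ (modByMonic_add_div f q).symm),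
      Polynomial.map_mul, Polynomial.map_map, ← IsScalarTower.algebraMap_eq, hsplit, nodal]
  have hf_r : ∀ k < n, divDiff k (f.map φ) (fun i : Fin (k + 1) => α i) =
      divDiff k (r.map φ) (fun i : Fin (k + 1) => α i) := fun k hk =>
    divDiff_eq_of_nodal_dvd_sub α <| hf_sub_r ▸
      dvd_mul_of_dvd_left (nodal_range_dvd_nodal_range α hk) _
  refine ⟨hf_r, fun hr0 => ?_⟩
  have hr_lt : r.natDegree < n := by
    have : Nontrivial (FractionRing D) := φ.domain_nontrivial
    rw [← hdeg, ← hp.natDegree_map (algebraMap D (FractionRing D))]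
    exact natDegree_lt_natDegree hr0 (hr ▸ degree_modByMonic_lt f (hp.map _))
  rw [← sum_divDiff_mul_nodal α (natDegree_map_le (f := φ) (p := r))]
  exact sum_congr rfl fun k hk => by rw [hf_r k ((mem_range.1 hk).trans_le hr_lt)]; rfl
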